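/- Let Γ be an n-space group and N a complete normal subgroup of Γ with V = Span(N). Then the quotient group Γ/N acts effectively on the set of cosets Eⁿ/V by the rule (N(b+B))·(V + x) = V + b + B x, i.e. this formula gives a well-defined faithful action of Γ/N on Eⁿ/V. -/

import Mathlib

/-- Euclidean n-space, as `Fin n → ℝ` with the dot product as inner product. -/
abbrev Eu (n : ℕ) : Type := Fin n → ℝ

/-- An isometry `a + A` of Euclidean n-space: `x ↦ a + A x` with `A` orthogonal. -/
@[ext] structure Iso (n : ℕ) where
  a : Eu n
  A : Matrix.orthogonalGroup (Fin n) ℝ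

namespace Iso

variable {n : ℕ}

/-- The matrix part of an isometry. -/
def mat (φ : Iso n) : Matrix (Fin n) (Fin n) ℝ := φ.A

instance : Mul (Iso n) := ⟨fun φ ψ => ⟨φ.a + φ.mat.mulVec ψ.a, φ.A * ψ.A⟩⟩
instance : One (Iso n) := ⟨⟨0, 1⟩⟩
instance : Inv (Iso n) :=
  ⟨fun φ => ⟨-(Matrix.mulVec ((φ.A⁻¹ : Matrix.orthogonalGroup (Fin n) ℝ) : Matrix (Fin n) (Fin n) ℝ) φ.a), φ.A⁻¹⟩⟩

@[simp] lemma mul_a (φ ψ : Iso n) : (φ * ψ).a = φ.a + φ.mat.mulVec ψ.a := rfl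
@[simp] lemma mul_A (φ ψ : Iso n) : (φ * ψ).A = φ.A * ψ.A := rfl
@[simp] lemma one_a : (1 : Iso n).a = 0 := rfl
@[simp] lemma one_A : (1 : Iso n).A = 1 := rfl
@[simp] lemma inv_A (φ : Iso n) : (φ⁻¹).A = φ.A⁻¹ := rfl
@[simp] lemma mat_mul (φ ψ : Iso n) : (φ * ψ).mat = φ.mat * ψ.mat := rfl
@[simp] lemma mat_one : (1 : Iso n).mat = 1 := rfl

instance : Group (Iso n) where
  mul_assoc φ ψ χ := by
    ext1
    · simp [Matrix.mulVec_add, ← Matrix.mulVec_mulVec, add_assoc]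
    · exact mul_assoc _ _ _
  one_mul φ := by
    ext1
    · simp
    · exact one_mul _
  mul_one φ := by
    ext1
    · simp
    · exact mul_one _
  inv_mul_cancel φ := by
    ext1
    · show (φ⁻¹).a + (φ⁻¹).mat.mulVec φ.a = (0 : Eu n)
      show -(Matrix.mulVec _ φ.a) + Matrix.mulVec _ φ.a = (0 : Eu n)
      exact neg_add_cancel _
    · exact inv_mul_cancel _

instance : SMul (Iso n) (Eu n) := ⟨fun φ x => φ.a + φ.mat.mulVec x⟩

lemma smul_def (φ : Iso n) (x : Eu n) : φ • x = φ.a + φ.mat.mulVec x := rfl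

instance : MulAction (Iso n) (Eu n) where
  one_smul x := by
    show (0 : Eu n) + (1 : Iso n).mat.mulVec x = x
    simp
  mul_smul φ ψ x := by
    show (φ * ψ).a + (φ * ψ).mat.mulVec x = φ.a + φ.mat.mulVec (ψ.a + ψ.mat.mulVec x)
    simp [Matrix.mulVec_add, ← Matrix.mulVec_mulVec, add_assoc]

/-- The translation `x ↦ v + x`. -/
def tr (v : Eu n) : Iso n := ⟨v, 1⟩

instance : TopologicalSpace (Iso n) :=
  TopologicalSpace.induced (fun φ => (φ.a, φ.mat)) inferInstance

end Iso

/-- The orthogonal complement of a subspace of Euclidean n-space,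
with respect to the standard (dot product) inner product. -/
def perp {n : ℕ} (V : Submodule ℝ (Eu n)) : Submodule ℝ (Eu n) where
  carrier := {x | ∀ v ∈ V, dotProduct v x = 0}
  add_mem' := by
    intro x y hx hy v hv
    simp [dotProduct_add, hx v hv, hy v hv]
  zero_mem' := by
    intro v hv
    simp
  smul_mem' := by
    intro c x hx v hv
    simp [dotProduct_smul, hx v hv]

/-- The span of a subgroup of isometries: the real span of the translation
vectors of the pure translations in it. -/
def spanOf {n : ℕ} (H : Subgroup (Iso n)) : Submodule ℝ (Eu n) :=
  Submodule.span ℝ {v : Eu n | Iso.tr v ∈ H}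

/-- `N` is a normal subgroup of `Γ` (as subgroups of the isometry group). -/
def NormalIn {n : ℕ} (N Γ : Subgroup (Iso n)) : Prop :=
  N ≤ Γ ∧ ∀ γ ∈ Γ, ∀ ν ∈ N, γ * ν * γ⁻¹ ∈ N

/-- An n-space group: a discrete subgroup of the isometry group of Euclidean
n-space with compact orbit space. -/
def IsSpaceGroup {n : ℕ} (Γ : Subgroup (Iso n)) : Prop :=
  DiscreteTopology Γ ∧
    IsCompact (Set.univ : Set (Quotient (MulAction.orbitRel Γ (Eu n))))

/-- `N` is a complete normal subgroup of `Γ`. -/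
def IsCompleteNormal {n : ℕ} (N Γ : Subgroup (Iso n)) : Prop :=
  NormalIn N Γ ∧
    ∀ g : Iso n, g ∈ N ↔
      (g ∈ Γ ∧ g.a ∈ spanOf N ∧ ∀ x ∈ perp (spanOf N), (Iso.mat g).mulVec x = x)


section Aux

open Matrix

variable {n : ℕ}

lemma Iso.conj_tr (γ : Iso n) (v : Eu n) :
    γ * Iso.tr v * γ⁻¹ = Iso.tr (γ.mat.mulVec v) := by
  have horth : γ.mat * (Matrix.transpose γ.mat) = 1 := by
    have := γ.A.2
    rw [Matrix.mem_orthogonalGroup_iff] at this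
    simpa [Iso.mat, Matrix.star_eq_conjTranspose] using this
  ext1
  · show (γ * Iso.tr v).a + (γ * Iso.tr v).mat.mulVec (γ⁻¹).a = _
    show γ.a + γ.mat.mulVec v + ((γ.A * (1:Matrix.orthogonalGroup (Fin n) ℝ)) : Matrix (Fin n) (Fin n) ℝ).mulVec
      (-(Matrix.mulVec ((γ.A⁻¹ : Matrix.orthogonalGroup (Fin n) ℝ) : Matrix (Fin n) (Fin n) ℝ) γ.a)) = γ.mat.mulVec v
    have hc : ((γ.A⁻¹ : Matrix.orthogonalGroup (Fin n) ℝ) : Matrix (Fin n) (Fin n) ℝ) = Matrix.transpose γ.mat := rfl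
    rw [hc]
    rw [show ((γ.A * (1:Matrix.orthogonalGroup (Fin n) ℝ)) : Matrix (Fin n) (Fin n) ℝ) = γ.mat * 1 from rfl]
    simp [Matrix.mulVec_neg, Matrix.mulVec_mulVec, horth]
  · show γ.A * 1 * γ.A⁻¹ = 1
    simp

lemma exists_decomp (V : Submodule ℝ (Eu n)) (x : Eu n) :
    ∃ p ∈ V, ∃ q ∈ perp V, x = p + q := by
  let e : EuclideanSpace ℝ (Fin n) ≃ₗ[ℝ] Eu n := WithLp.linearEquiv 2 ℝ (Eu n)
  let K : Submodule ℝ (EuclideanSpace ℝ (Fin n)) := V.comap e.toLinearMap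
  obtain ⟨y, hy, z, hz, hsum⟩ := K.exists_add_mem_mem_orthogonal (e.symm x)
  refine ⟨e y, hy, e z, ?_, ?_⟩
  · intro v hv
    have hu : e.symm v ∈ K := by
      simp [K, Submodule.mem_comap, LinearEquiv.apply_symm_apply, hv]
    have := hz (e.symm v) hu
    rw [PiLp.inner_apply] at this
    simpa [dotProduct, RCLike.inner_apply, e, mul_comm] using this
  · have := congrArg e hsum
    simpa using this

lemma mapsV {Γ N : Subgroup (Iso n)} (hnorm : NormalIn N Γ) {γ : Iso n} (hγ : γ ∈ Γ)
    {v : Eu n} (hv : v ∈ spanOf N) : γ.mat.mulVec v ∈ spanOf N := by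
  induction hv using Submodule.span_induction with
  | mem w hw =>
      have : γ * Iso.tr w * γ⁻¹ ∈ N := hnorm.2 γ hγ _ hw
      rw [Iso.conj_tr] at this
      exact Submodule.subset_span this
  | zero => simp [Matrix.mulVec_zero]
  | add x y _ _ hx hy => rw [Matrix.mulVec_add]; exact add_mem hx hy
  | smul c x _ hx => rw [Matrix.mulVec_smul]; exact Submodule.smul_mem _ c hx

end Aux

/-- Theorem (Lemma 1 of Ratcliffe–Tschantz): if `N` is a complete normal subgroup of an
`n`-space group `Γ` and `V = Span N`, then `Γ/N` acts effectively as a group of isometries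
of `Eⁿ/V` by `(N(b+B))(V+x) = V + b + Bx`; i.e. the isometric action of `Γ` on `Eⁿ`
descends to the cosets of `V` (cosets are mapped to cosets), and the kernel of the
descended action is exactly `N`. -/
theorem quotient_action_effective {n : ℕ} (Γ N : Subgroup (Iso n))
    (hΓ : IsSpaceGroup Γ) (hN : IsCompleteNormal N Γ) :
    (∀ γ ∈ Γ, ∀ x y : Eu n, x - y ∈ spanOf N → γ • x - γ • y ∈ spanOf N) ∧
    (∀ γ ∈ Γ, (∀ x : Eu n, γ • x - x ∈ spanOf N) ↔ γ ∈ N) := by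
  set V := spanOf N with hV
  have part1 : ∀ γ ∈ Γ, ∀ x y : Eu n, x - y ∈ V → γ • x - γ • y ∈ V := by
    intro γ hγ x y hxy
    have : γ • x - γ • y = γ.mat.mulVec (x - y) := by
      simp [Iso.smul_def, Matrix.mulVec_sub]
    rw [this]
    exact mapsV hN.1 hγ hxy
  refine ⟨part1, fun γ hγ => ⟨fun h => ?_, fun hγN x => ?_⟩⟩
  · -- kernel ⊆ N
    have ha : γ.a ∈ V := by
      have := h 0
      simpa [Iso.smul_def, Matrix.mulVec_zero] using this
    refine (hN.2 γ).mpr ⟨hγ, ha, fun x hx => ?_⟩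
    have hmem : γ.mat.mulVec x - x ∈ V := by
      have h1 := h x
      have : γ • x - x - γ.a = γ.mat.mulVec x - x := by
        simp [Iso.smul_def]; abel
      rw [← this]
      exact sub_mem h1 ha
    have hBx : γ.mat.mulVec x ∈ perp V := by
      intro v hv
      have hT : Matrix.vecMul v γ.mat = (γ⁻¹).mat.mulVec v := by
        show Matrix.vecMul v γ.mat = Matrix.mulVec ((γ.A⁻¹ : Matrix.orthogonalGroup (Fin n) ℝ) : Matrix (Fin n) (Fin n) ℝ) v
        rw [show ((γ.A⁻¹ : Matrix.orthogonalGroup (Fin n) ℝ) : Matrix (Fin n) (Fin n) ℝ) = Matrix.transpose γ.mat from rfl]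
        rw [Matrix.mulVec_transpose]
      rw [Matrix.dotProduct_mulVec, hT]
      exact hx _ (mapsV hN.1 (inv_mem hγ) hv)
    have hperp : γ.mat.mulVec x - x ∈ perp V := sub_mem hBx hx
    have hzero : γ.mat.mulVec x - x = 0 := by
      rw [← dotProduct_self_eq_zero]
      exact hperp _ hmem
    have := sub_eq_zero.mp hzero
    exact this
  · -- N ⊆ kernel
    obtain ⟨hγΓ, ha, hfix⟩ := (hN.2 γ).mp hγN
    obtain ⟨p, hp, q, hq, hx⟩ := exists_decomp V x
    have hBp : γ.mat.mulVec p ∈ V := mapsV hN.1 hγΓ hp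
    have : γ • x - x = γ.a + (γ.mat.mulVec p - p) := by
      rw [hx, Iso.smul_def, Matrix.mulVec_add, hfix q hq]
      abel
    rw [this]
    exact add_mem ha (sub_mem hBp hp)
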